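/- The refined calculus Rf(box, T_{K_m(¬)}) is sound for the logic K_m(¬): every fully expanded Rf(box, T_{K_m(¬)})-tableau for a satisfiable finite set of K_m(¬)-formulas has an open branch (indeed, the refined rule (□) is derivable in T_{K_m(¬)}, so every rule of Rf(box, T_{K_m(¬)}) preserves satisfiability of at least one denominator). -/

import Mathlib

set_option autoImplicit false

namespace KmNotTableau

/-- Relation terms of the logic `K_m(¬)`: `α ::= a_1 | … | a_m | ¬α`. -/
inductive RTerm (m : ℕ) : Type
  | atom : Fin m → RTerm m
  | neg : RTerm m → RTerm m

/-- Formulas of the logic `K_m(¬)`: `φ ::= p | ¬φ | φ∨φ | [α]φ`. -/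
inductive Fm (m : ℕ) : Type
  | var : ℕ → Fm m
  | neg : Fm m → Fm m
  | or : Fm m → Fm m → Fm m
  | box : RTerm m → Fm m → Fm m

/-- A `K_m(¬)`-model `M = (W, (R_a)_a, V)` with `W` nonempty. -/
structure KModel (m : ℕ) where
  W : Type
  ne : Nonempty W
  R : Fin m → W → W → Prop
  V : ℕ → W → Prop

/-- Interpretation of relation terms: `R_{¬α} = (W×W) ∖ R_α`. -/
def KModel.RT {m : ℕ} (M : KModel m) : RTerm m → M.W → M.W → Prop
  | .atom a => M.R a
  | .neg α => fun v w => ¬ M.RT α v w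

/-- Satisfaction in a `K_m(¬)`-model. -/
def KModel.sat {m : ℕ} (M : KModel m) : M.W → Fm m → Prop
  | v, .var p => M.V p v
  | v, .neg φ => ¬ M.sat v φ
  | v, .or φ ψ => M.sat v φ ∨ M.sat v ψ
  | v, .box α φ => ∀ w, M.RT α v w → M.sat w φ

/-- A set of formulas is satisfiable if some model and world satisfy all its members. -/
def Satisfiable {m : ℕ} (N : Set (Fm m)) : Prop :=
  ∃ (M : KModel m) (v : M.W), ∀ φ ∈ N, M.sat v φ

/-- Labels: terms generated from the initial constant `a₀` and Skolem terms `f(α,φ,t)`. -/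
inductive Label (m : ℕ) : Type
  | a0 : Label m
  | sk : RTerm m → Fm m → Label m → Label m

/-- Tableau formulas: `T(φ,t)`, `F(φ,t)`, `T_R(α,t,t')`, `F_R(α,t,t')`. -/
inductive TabFm (m : ℕ) : Type
  | T : Fm m → Label m → TabFm m
  | F : Fm m → Label m → TabFm m
  | TR : RTerm m → Label m → Label m → TabFm m
  | FR : RTerm m → Label m → Label m → TabFm m

/-- The labels occurring in a tableau formula. -/
def TabFm.labels {m : ℕ} : TabFm m → Set (Label m)
  | .T _ t => {t}
  | .F _ t => {t}
  | .TR _ t t' => {t, t'}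
  | .FR _ t t' => {t, t'}

/-- The labels occurring in a set of tableau formulas (the initial label `a₀`,
introduced at the root, always counts as occurring). -/
def Lab {m : ℕ} (B : Set (TabFm m)) : Set (Label m) :=
  insert Label.a0 {t | ∃ f ∈ B, t ∈ f.labels}

/-- A calculus: `C s ds` holds if, on a branch whose set of formulas is `s`, some rule
of the calculus is applicable with denominator instances `ds` (a closure rule
application has `ds = []`). -/
abbrev Calc (m : ℕ) := Set (TabFm m) → List (Set (TabFm m)) → Prop

/-- The root node `{T(φ,a₀) | φ ∈ N}` of a tableau for input `N`. -/
def initial {m : ℕ} (N : Set (Fm m)) : Set (TabFm m) :=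
  {f | ∃ φ ∈ N, f = TabFm.T φ Label.a0}

/-- A tableau for input `N` in calculus `C`: a finitely branching tree of sets of tableau
formulas (nodes indexed by positions `List ℕ`, children of `p` being `p ++ [i]`), whose
root is `{T(φ,a₀) | φ ∈ N}`, and such that the children of every node are obtained by
applying a rule of `C`: each child adds one denominator instance to the node's set. -/
structure Tableau (m : ℕ) (C : Calc m) (N : Set (Fm m)) where
  node : List ℕ → Option (Set (TabFm m))
  rootEq : node [] = some (initial N)
  tree : ∀ (p : List ℕ) (i : ℕ), node (p ++ [i]) ≠ none → node p ≠ none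
  step : ∀ (p : List ℕ) (s : Set (TabFm m)), node p = some s →
    (∀ i : ℕ, node (p ++ [i]) = none) ∨
    (∃ ds, C s ds ∧ ∀ i : ℕ, node (p ++ [i]) = (ds[i]?).map (fun d => s ∪ d))

/-- A branch of a tableau: a maximal path from the root (represented by its
set of positions, a maximal chain under the prefix order). -/
structure Branch {m : ℕ} {C : Calc m} {N : Set (Fm m)} (Tb : Tableau m C N) where
  pos : Set (List ℕ)
  inTree : ∀ p ∈ pos, Tb.node p ≠ none
  chain : ∀ p ∈ pos, ∀ q ∈ pos, p <+: q ∨ q <+: p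
  downClosed : ∀ p ∈ pos, ∀ q : List ℕ, q <+: p → q ∈ pos
  maximal : ∀ q : List ℕ, Tb.node q ≠ none → (∀ p ∈ pos, p <+: q ∨ q <+: p) → q ∈ pos

/-- The set of tableau formulas occurring on a branch. -/
def Branch.fmls {m : ℕ} {C : Calc m} {N : Set (Fm m)} {Tb : Tableau m C N}
    (Br : Branch Tb) : Set (TabFm m) :=
  {f | ∃ p ∈ Br.pos, ∃ s, Tb.node p = some s ∧ f ∈ s}

/-- A branch is open if no closure rule has been applied (is applicable) on it. -/
def Branch.IsOpen {m : ℕ} {C : Calc m} {N : Set (Fm m)} {Tb : Tableau m C N}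
    (Br : Branch Tb) : Prop := ¬ C Br.fmls []

/-- A tableau is fully expanded if on every open branch every applicable rule has been
applied, i.e. some denominator instance of the rule is already contained in the branch. -/
def Tableau.Expanded {m : ℕ} {C : Calc m} {N : Set (Fm m)} (Tb : Tableau m C N) : Prop :=
  ∀ Br : Branch Tb, Br.IsOpen → ∀ ds, C Br.fmls ds → ∃ d ∈ ds, d ⊆ Br.fmls

/-- A `K_m(¬)`-model whose domain is (a set of) labels: the model `I(B)` constructed
from a branch has domain the set of labels occurring in `B`. -/
structure LModel (m : ℕ) where
  R : Fin m → Label m → Label m → Prop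
  V : ℕ → Label m → Prop

/-- Interpretation of relation terms in a label model: `R_{¬α}` is the complement. -/
def LModel.RT {m : ℕ} (M : LModel m) : RTerm m → Label m → Label m → Prop
  | .atom a => M.R a
  | .neg α => fun t t' => ¬ M.RT α t t'

/-- Satisfaction in a label model relativised to its domain `D`. -/
def LModel.sat {m : ℕ} (M : LModel m) (D : Set (Label m)) : Label m → Fm m → Prop
  | t, .var p => M.V p t
  | t, .neg φ => ¬ M.sat D t φ
  | t, .or φ ψ => M.sat D t φ ∨ M.sat D t ψ
  | t, .box α φ => ∀ t' ∈ D, M.RT α t t' → M.sat D t' φ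

/-- Every tableau formula of `B` is true in the model `M` with domain `Lab B`:
`T(φ,t) ∈ B` implies `φ` holds at `t`; `F(φ,t) ∈ B` implies `φ` fails at `t`;
`T_R(α,t,t') ∈ B` implies `(t,t') ∈ R_α`; `F_R(α,t,t') ∈ B` implies `(t,t') ∉ R_α`. -/
def Reflects {m : ℕ} (M : LModel m) (B : Set (TabFm m)) : Prop :=
  (∀ φ t, TabFm.T φ t ∈ B → M.sat (Lab B) t φ) ∧
  (∀ φ t, TabFm.F φ t ∈ B → ¬ M.sat (Lab B) t φ) ∧
  (∀ α t t', TabFm.TR α t t' ∈ B → M.RT α t t') ∧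
  (∀ α t t', TabFm.FR α t t' ∈ B → ¬ M.RT α t t')

/-- The calculus `T_{K_m(¬)}`. -/
def TKmNot (m : ℕ) : Calc m := fun s ds =>
  -- (¬⁺) T(¬p,x) / F(p,x)
  (∃ φ x, TabFm.T (.neg φ) x ∈ s ∧ ds = [{TabFm.F φ x}]) ∨
  -- (¬⁻) F(¬p,x) / T(p,x)
  (∃ φ x, TabFm.F (.neg φ) x ∈ s ∧ ds = [{TabFm.T φ x}]) ∨
  -- (∨⁺) T(p∨q,x) / T(p,x) | T(q,x)
  (∃ φ ψ x, TabFm.T (.or φ ψ) x ∈ s ∧ ds = [{TabFm.T φ x}, {TabFm.T ψ x}]) ∨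
  -- (∨⁻) F(p∨q,x) / F(p,x), F(q,x)
  (∃ φ ψ x, TabFm.F (.or φ ψ) x ∈ s ∧ ds = [{TabFm.F φ x, TabFm.F ψ x}]) ∨
  -- (box) T([r]p,x) / F_R(r,x,y) | T(p,y), for any label y occurring on the branch
  (∃ α φ x y, TabFm.T (.box α φ) x ∈ s ∧ y ∈ Lab s ∧
    ds = [{TabFm.FR α x y}, {TabFm.T φ y}]) ∨
  -- (dia) F([r]p,x) / T_R(r,x,f(r,p,x)), F(p,f(r,p,x))
  (∃ α φ x, TabFm.F (.box α φ) x ∈ s ∧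
    ds = [{TabFm.TR α x (Label.sk α φ x), TabFm.F φ (Label.sk α φ x)}]) ∨
  -- closure rules
  (∃ φ x, TabFm.T φ x ∈ s ∧ TabFm.F φ x ∈ s ∧ ds = []) ∨
  (∃ α x y, TabFm.TR α x y ∈ s ∧ TabFm.FR α x y ∈ s ∧ ds = []) ∨
  -- (¬R⁺) T_R(¬r,x,y) / F_R(r,x,y)
  (∃ α x y, TabFm.TR (.neg α) x y ∈ s ∧ ds = [{TabFm.FR α x y}]) ∨
  -- (¬R⁻) F_R(¬r,x,y) / T_R(r,x,y)
  (∃ α x y, TabFm.FR (.neg α) x y ∈ s ∧ ds = [{TabFm.TR α x y}])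

/-- The refined calculus `Rf(box, T_{K_m(¬)})`: `T_{K_m(¬)}` with the rule (box)
replaced by the rule (□): `T([r]p,x), T_R(r,x,y) / T(p,y)`. -/
def RfKmNot (m : ℕ) : Calc m := fun s ds =>
  (∃ φ x, TabFm.T (.neg φ) x ∈ s ∧ ds = [{TabFm.F φ x}]) ∨
  (∃ φ x, TabFm.F (.neg φ) x ∈ s ∧ ds = [{TabFm.T φ x}]) ∨
  (∃ φ ψ x, TabFm.T (.or φ ψ) x ∈ s ∧ ds = [{TabFm.T φ x}, {TabFm.T ψ x}]) ∨
  (∃ φ ψ x, TabFm.F (.or φ ψ) x ∈ s ∧ ds = [{TabFm.F φ x, TabFm.F ψ x}]) ∨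
  -- (□) T([r]p,x), T_R(r,x,y) / T(p,y)
  (∃ α φ x y, TabFm.T (.box α φ) x ∈ s ∧ TabFm.TR α x y ∈ s ∧ ds = [{TabFm.T φ y}]) ∨
  (∃ α φ x, TabFm.F (.box α φ) x ∈ s ∧
    ds = [{TabFm.TR α x (Label.sk α φ x), TabFm.F φ (Label.sk α φ x)}]) ∨
  (∃ φ x, TabFm.T φ x ∈ s ∧ TabFm.F φ x ∈ s ∧ ds = []) ∨
  (∃ α x y, TabFm.TR α x y ∈ s ∧ TabFm.FR α x y ∈ s ∧ ds = []) ∨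
  (∃ α x y, TabFm.TR (.neg α) x y ∈ s ∧ ds = [{TabFm.FR α x y}]) ∨
  (∃ α x y, TabFm.FR (.neg α) x y ∈ s ∧ ds = [{TabFm.TR α x y}])

/-!
Given a world `v` of a model satisfying the input, interpret `a₀` as `v` and each Skolem label
`f(α,φ,t)` as an `α`-successor of (the interpretation of) `t` refuting `φ`, whenever one exists.
Every rule of `Rf(box, T_{K_m(¬)})` applied to tableau formulas true under this interpretation has
a denominator of true formulas (for (□) this is just the semantics of `[α]`). Following such
denominators from the root gives a branch all of whose formulas are true, so no closure rule
applies to it.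
-/

/-- In particular no closure rule applies to a set all of whose formulas satisfy `P`. -/
def RulesPreserve {m : ℕ} (C : Calc m) (P : TabFm m → Prop) : Prop :=
  ∀ s ds, (∀ f ∈ s, P f) → C s ds → ∃ d ∈ ds, ∀ f ∈ d, P f

section SatBranch

variable {m : ℕ} {C : Calc m} {N : Set (Fm m)} (Tb : Tableau m C N) (P : TabFm m → Prop)

def Tableau.SatAt (p : List ℕ) : Prop :=
  ∃ s, Tb.node p = some s ∧ ∀ f ∈ s, P f

theorem Tableau.node_ne_none_of_append {p r : List ℕ} (h : Tb.node (p ++ r) ≠ none) :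
    Tb.node p ≠ none := by
  induction r using List.reverseRecOn with
  | nil => simpa using h
  | append_singleton r i ih => exact ih (Tb.tree _ i (by rwa [List.append_assoc]))

open Classical in
noncomputable def Tableau.satExtend (p : List ℕ) : List ℕ :=
  if h : ∃ i, Tb.SatAt P (p ++ [i]) then p ++ [h.choose] else p

noncomputable def Tableau.satPath (n : ℕ) : List ℕ :=
  (Tb.satExtend P)^[n] []

variable {Tb P}

theorem Tableau.satPath_succ (n : ℕ) :
    Tb.satPath P (n + 1) = Tb.satExtend P (Tb.satPath P n) :=
  Function.iterate_succ_apply' _ _ _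

theorem Tableau.exists_satAt_child (hC : RulesPreserve C P) {p : List ℕ} (hp : Tb.SatAt P p)
    {j : ℕ} (hj : Tb.node (p ++ [j]) ≠ none) : ∃ i, Tb.SatAt P (p ++ [i]) := by
  obtain ⟨s, hs, hsP⟩ := hp
  rcases Tb.step p s hs with hleaf | ⟨ds, hds, hchildren⟩
  · exact absurd (hleaf j) hj
  obtain ⟨d, hd, hdP⟩ := hC s ds hsP hds
  obtain ⟨i, hi, rfl⟩ := List.mem_iff_getElem.mp hd
  refine ⟨i, s ∪ ds[i], by rw [hchildren i, List.getElem?_eq_getElem hi]; rfl, ?_⟩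
  rintro f (hf | hf)
  exacts [hsP f hf, hdP f hf]

theorem Tableau.satExtend_eq_of_child (hC : RulesPreserve C P) {p : List ℕ}
    (hp : Tb.SatAt P p) {j : ℕ} (hj : Tb.node (p ++ [j]) ≠ none) :
    ∃ i, Tb.satExtend P p = p ++ [i] :=
  ⟨_, dif_pos (Tb.exists_satAt_child hC hp hj)⟩

theorem Tableau.satAt_satExtend {p : List ℕ} (hp : Tb.SatAt P p) :
    Tb.SatAt P (Tb.satExtend P p) := by
  unfold Tableau.satExtend
  split_ifs with h
  exacts [h.choose_spec, hp]

theorem Tableau.satAt_satPath (hroot : Tb.SatAt P []) (n : ℕ) : Tb.SatAt P (Tb.satPath P n) := by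
  induction n with
  | zero => exact hroot
  | succ n ih => rw [Tb.satPath_succ]; exact Tb.satAt_satExtend ih

theorem Tableau.prefix_satExtend (p : List ℕ) : p <+: Tb.satExtend P p := by
  unfold Tableau.satExtend
  split_ifs
  exacts [List.prefix_append _ _, List.prefix_refl _]

theorem Tableau.satPath_prefix_of_le {i j : ℕ} (h : i ≤ j) :
    Tb.satPath P i <+: Tb.satPath P j := by
  induction j, h using Nat.le_induction with
  | base => exact List.prefix_refl _
  | succ j _ ih => exact ih.trans (by rw [Tb.satPath_succ]; exact Tb.prefix_satExtend _)

theorem Tableau.exists_satPath_eq_of_prefix {q : List ℕ} {n : ℕ} (hq : q <+: Tb.satPath P n) :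
    ∃ k, Tb.satPath P k = q := by
  induction n with
  | zero => exact ⟨0, (List.prefix_nil.mp hq).symm⟩
  | succ n ih =>
    rw [Tb.satPath_succ] at hq
    unfold Tableau.satExtend at hq
    split_ifs at hq
    · rcases List.prefix_concat_iff.mp hq with rfl | hq
      · exact ⟨n + 1, by rw [Tb.satPath_succ, Tableau.satExtend, dif_pos ‹_›]⟩
      · exact ih hq
    · exact ih hq

/-- A tree position comparable with every position of the path lies on it: as long as the
path is a proper prefix of `q`, the child of its end towards `q` exists, so the path does
not stop and its next step, being comparable with `q`, is again a prefix of `q`. -/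
theorem Tableau.satPath_length_eq_of_forall_comparable (hC : RulesPreserve C P)
    (hroot : Tb.SatAt P []) {q : List ℕ} (hq : Tb.node q ≠ none)
    (hcomp : ∀ n, Tb.satPath P n <+: q ∨ q <+: Tb.satPath P n) :
    Tb.satPath P q.length = q := by
  suffices h : ∀ k ≤ q.length, Tb.satPath P k <+: q ∧ (Tb.satPath P k).length = k from
    (h _ le_rfl).1.eq_of_length (h _ le_rfl).2
  intro k hk
  induction k with
  | zero => exact ⟨List.nil_prefix, rfl⟩
  | succ k ih =>
    obtain ⟨⟨t, rfl⟩, hlen⟩ := ih (by omega)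
    obtain ⟨j, r, rfl⟩ : ∃ j r, t = j :: r := by
      cases t with
      | nil => simp at hk; omega
      | cons j r => exact ⟨j, r, rfl⟩
    have hchild : Tb.node (Tb.satPath P k ++ [j]) ≠ none :=
      Tb.node_ne_none_of_append (r := r) (by simpa using hq)
    obtain ⟨i, hi⟩ := Tb.satExtend_eq_of_child hC (Tb.satAt_satPath hroot k) hchild
    have hlen' : (Tb.satPath P (k + 1)).length = k + 1 := by
      rw [Tb.satPath_succ, hi, List.length_append, hlen, List.length_singleton]
    refine ⟨?_, hlen'⟩
    rcases hcomp (k + 1) with h | h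
    · exact h
    · have hle := h.length_le
      rw [hlen'] at hle
      rw [h.eq_of_length (by rw [hlen']; exact le_antisymm hle hk)]

theorem Tableau.exists_branch_forall_fmls (hC : RulesPreserve C P)
    (hN : ∀ f ∈ initial N, P f) : ∃ Br : Branch Tb, ∀ f ∈ Br.fmls, P f := by
  have hroot : Tb.SatAt P [] := ⟨_, Tb.rootEq, hN⟩
  refine ⟨⟨Set.range (Tb.satPath P), ?_, ?_, ?_, ?_⟩, ?_⟩
  · rintro _ ⟨n, rfl⟩
    obtain ⟨s, hs, -⟩ := Tb.satAt_satPath hroot n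
    simp [hs]
  · rintro _ ⟨i, rfl⟩ _ ⟨j, rfl⟩
    rcases le_total i j with h | h
    exacts [.inl (Tb.satPath_prefix_of_le h), .inr (Tb.satPath_prefix_of_le h)]
  · rintro _ ⟨n, rfl⟩ q hq
    exact Tb.exists_satPath_eq_of_prefix hq
  · intro q hq hcomp
    exact ⟨q.length,
      Tb.satPath_length_eq_of_forall_comparable hC hroot hq fun n => hcomp _ ⟨n, rfl⟩⟩
  · rintro f ⟨_, ⟨n, rfl⟩, s, hs, hf⟩
    obtain ⟨s', hs', hsP⟩ := Tb.satAt_satPath hroot n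
    cases hs.symm.trans hs'
    exact hsP f hf

end SatBranch

section Semantics

variable {m : ℕ} (M : KModel m)

def Holds (ι : Label m → M.W) : TabFm m → Prop
  | .T φ t => M.sat (ι t) φ
  | .F φ t => ¬ M.sat (ι t) φ
  | .TR α t t' => M.RT α (ι t) (ι t')
  | .FR α t t' => ¬ M.RT α (ι t) (ι t')

noncomputable def skolemInterp (v : M.W) : Label m → M.W
  | .a0 => v
  | .sk α φ t =>
    @Classical.epsilon M.W M.ne fun w => M.RT α (skolemInterp v t) w ∧ ¬ M.sat w φ

theorem skolemInterp_sk (v : M.W) {α : RTerm m} {φ : Fm m} {t : Label m}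
    (h : ∃ w, M.RT α (skolemInterp M v t) w ∧ ¬ M.sat w φ) :
    M.RT α (skolemInterp M v t) (skolemInterp M v (.sk α φ t)) ∧
      ¬ M.sat (skolemInterp M v (.sk α φ t)) φ :=
  Classical.epsilon_spec h

theorem rulesPreserve_rfKmNot {ι : Label m → M.W}
    (hι : ∀ α φ t, (∃ w, M.RT α (ι t) w ∧ ¬ M.sat w φ) →
      M.RT α (ι t) (ι (.sk α φ t)) ∧ ¬ M.sat (ι (.sk α φ t)) φ) :
    RulesPreserve (RfKmNot m) (Holds M ι) := by
  intro s ds hs hC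
  rcases hC with ⟨φ, x, hm, rfl⟩ | ⟨φ, x, hm, rfl⟩ | ⟨φ, ψ, x, hm, rfl⟩ |
    ⟨φ, ψ, x, hm, rfl⟩ | ⟨α, φ, x, y, hm, hm', rfl⟩ | ⟨α, φ, x, hm, rfl⟩ |
    ⟨φ, x, hm, hm', rfl⟩ | ⟨α, x, y, hm, hm', rfl⟩ | ⟨α, x, y, hm, rfl⟩ |
    ⟨α, x, y, hm, rfl⟩ <;>
  have h := hs _ hm <;>
  simp only [List.mem_cons, List.not_mem_nil, or_false, exists_eq_or_imp, exists_eq_left,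
    Set.mem_insert_iff, Set.mem_singleton_iff, forall_eq_or_imp, forall_eq, Holds,
    KModel.sat, KModel.RT, not_not, not_or, false_and, exists_false] at h ⊢
  · exact h
  · exact h
  · exact h
  · exact h
  · exact h _ (hs _ hm')
  · exact hι α φ x (by simpa using h)
  · exact hs _ hm' h
  · exact hs _ hm' h
  · exact h
  · exact h

end Semantics

/-- The refined calculus `Rf(box, T_{K_m(¬)})` is sound for the logic
`K_m(¬)`: every fully expanded `Rf(box, T_{K_m(¬)})`-tableau for a satisfiable finite
set of `K_m(¬)`-formulas has an open branch. -/
theorem RfKmNot_sound (m : ℕ) :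
    ∀ N : Set (Fm m), N.Finite → Satisfiable N →
      ∀ Tb : Tableau m (RfKmNot m) N, Tb.Expanded → ∃ Br : Branch Tb, Br.IsOpen := by
  intro N _ ⟨M, v, hv⟩ Tb _
  have hC : RulesPreserve (RfKmNot m) (Holds M (skolemInterp M v)) :=
    rulesPreserve_rfKmNot M fun _ _ _ => skolemInterp_sk M v
  have hroot : ∀ f ∈ initial N, Holds M (skolemInterp M v) f := by
    rintro _ ⟨φ, hφ, rfl⟩
    exact hv φ hφ
  obtain ⟨Br, hBr⟩ := Tb.exists_branch_forall_fmls hC hroot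
  refine ⟨Br, fun hclosed => ?_⟩
  obtain ⟨d, hd, -⟩ := hC _ _ hBr hclosed
  exact List.not_mem_nil hd

end KmNotTableau
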